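/- Let q ≥ 3 and let G' be the disjoint union of two cycles of length 2q. Then deg(P_{G'}) ≥ 2q − 2, where deg(P) denotes the degree of the h*-polynomial of the edge polytope P_{G'}. In particular deg(P_{G'}) ≥ q. -/

import Mathlib

open MvPolynomial Finset
open scoped Pointwise

/-! ## Polytope / Ehrhart definitions -/

/-- The lattice-point enumerator of dilates of `P` (with the convention `E(0) = 1`). -/
noncomputable def ehrhart {V : Type} (P : Set (V → ℝ)) (t : ℕ) : ℤ :=
  if t = 0 then 1 else
    Nat.card {x : V → ℤ | (fun v => (x v : ℝ)) ∈ (t : ℝ) • P}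

/-- The `i`-th coefficient of the `h^*`-polynomial of `P`, computed with respect to
dimension `d`, via the inversion formula
`h^*_i = ∑_{j ≤ i} (-1)^j (d+1 choose j) E(i-j)`. -/
noncomputable def hstarCoeff {V : Type} (P : Set (V → ℝ)) (d i : ℕ) : ℤ :=
  ∑ j ∈ Finset.range (i + 1), (-1 : ℤ) ^ j * (Nat.choose (d + 1) j) * ehrhart P (i - j)

/-- The dimension of `P`, i.e. the dimension of its affine hull. -/
noncomputable def polyDim {V : Type} [Fintype V] (P : Set (V → ℝ)) : ℕ :=
  Module.finrank ℝ (vectorSpan ℝ P)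

/-- The degree of the `h^*`-polynomial of `P`. -/
noncomputable def hstarDeg {V : Type} [Fintype V] (P : Set (V → ℝ)) : ℕ :=
  sSup {i : ℕ | hstarCoeff P (polyDim P) i ≠ 0}

/-- The codegree of `P`: the least positive dilation factor `r` such that the relative
interior of `r • P` contains a lattice point. -/
noncomputable def polyCodeg {V : Type} [Fintype V] (P : Set (V → ℝ)) : ℕ :=
  sInf {r : ℕ | 1 ≤ r ∧
    ∃ x : V → ℤ, (fun v => (x v : ℝ)) ∈ intrinsicInterior ℝ ((r : ℝ) • P)}

/-! ## Edge polytopes and edge rings -/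

/-- `ρ(e) = 𝐞_i + 𝐞_j` for an edge `e = {i,j}`, as a point of `ℝ^V`. -/
noncomputable def rho {V : Type} [DecidableEq V] (e : Sym2 V) : V → ℝ :=
  Sym2.lift ⟨fun a b v => (if v = a then (1 : ℝ) else 0) + (if v = b then 1 else 0),
    fun a b => by funext v; exact add_comm _ _⟩ e

/-- The edge polytope `P_G` of a graph `G`, the convex hull of the `ρ(e)`, `e ∈ E(G)`. -/
noncomputable def edgePolytope {V : Type} [DecidableEq V] (G : SimpleGraph V) :
    Set (V → ℝ) :=
  convexHull ℝ (rho '' G.edgeSet)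

/-- The monomial map `x_e ↦ t_i t_j s` (for `e = {i,j}`), from the polynomial ring on the
edges of `G` to `K[t_v : v ∈ V][s]`; the extra variable `s` is `X (Sum.inr ())`. -/
noncomputable def edgeRingHom (K : Type) [Field K] {V : Type} (G : SimpleGraph V) :
    MvPolynomial G.edgeSet K →ₐ[K] MvPolynomial (V ⊕ Unit) K :=
  MvPolynomial.aeval fun e =>
    Sym2.lift ⟨fun a b => X (Sum.inl a) * X (Sum.inl b) * X (Sum.inr ()),
      fun a b => by ring⟩ (e : Sym2 V)

/-- The toric ideal `I_G` of the graph `G`: the kernel of the monomial map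
`x_e ↦ t_i t_j s`.  The edge ring `K[G]` is (isomorphic to) the quotient by `I_G`. -/
noncomputable def toricIdeal (K : Type) [Field K] {V : Type} (G : SimpleGraph V) :
    Ideal (MvPolynomial G.edgeSet K) :=
  RingHom.ker (edgeRingHom K G)

/-- The variable corresponding to the `i`-th edge of the walk `c` (and `1` if `i` is out
of range). -/
noncomputable def edgeVar (K : Type) [Field K] {V : Type} {G : SimpleGraph V} {u v : V}
    (c : G.Walk u v) (i : ℕ) : MvPolynomial G.edgeSet K :=
  if h : i < c.edges.length then
    MvPolynomial.X ⟨c.edges.get ⟨i, h⟩, c.edges_subset_edgeSet (c.edges.get_mem _)⟩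
  else 1

/-- The binomial `f_C` of an even closed walk `C` of length `2m`: the alternating products
of the edge variables along `C`. -/
noncomputable def cycleBinomial (K : Type) [Field K] {V : Type} {G : SimpleGraph V}
    {u : V} (m : ℕ) (c : G.Walk u u) : MvPolynomial G.edgeSet K :=
  (∏ j ∈ Finset.range m, edgeVar K c (2 * j)) -
    ∏ j ∈ Finset.range m, edgeVar K c (2 * j + 1)

/-! ## Graded free resolutions -/

/-- A finite graded free resolution
`0 → F_len → ⋯ → F_2 → F_1 → S → S/I → 0` of `S/I`, where `S = K[x_σ]` with the
standard grading, `F_i` is the graded free module with basis `B i`, the basis element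
`b : B i` having degree `deg i b`.  `ε : F 1 → S` has image `I`, and the maps are graded
of degree zero. -/
structure GradedFreeRes {σ : Type} (K : Type) [Field K] (I : Ideal (MvPolynomial σ K)) where
  B : ℕ → Type
  finB : ∀ i, Finite (B i)
  len : ℕ
  empty_of_gt : ∀ i, len < i → IsEmpty (B i)
  deg : ∀ i, B i → ℕ
  ε : (B 1 →₀ MvPolynomial σ K) →ₗ[MvPolynomial σ K] MvPolynomial σ K
  φ : ∀ i : ℕ, (B (i + 2) →₀ MvPolynomial σ K) →ₗ[MvPolynomial σ K] (B (i + 1) →₀ MvPolynomial σ K)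
  range_ε : LinearMap.range ε = I
  exact_one : LinearMap.ker ε = LinearMap.range (φ 0)
  exact_succ : ∀ i, LinearMap.ker (φ i) = LinearMap.range (φ (i + 1))
  homog_ε : ∀ b : B 1, (ε (Finsupp.single b 1)).IsHomogeneous (deg 1 b)
  homog_φ : ∀ (i : ℕ) (b : B (i + 2)) (b' : B (i + 1)),
      ((φ i (Finsupp.single b 1)) b').IsHomogeneous (deg (i + 2) b - deg (i + 1) b') ∧
        (((φ i (Finsupp.single b 1)) b') ≠ 0 → deg (i + 1) b' ≤ deg (i + 2) b)

/-- `S/I` has a `q`-linear (minimal graded free) resolution:  there is a nontrivial finite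
graded free resolution of `S/I` in which the `i`-th free module is generated in the single
degree `q + i - 1` (for `i ≥ 1`). -/
def HasLinearResolution {σ : Type} (K : Type) [Field K] (I : Ideal (MvPolynomial σ K))
    (q : ℕ) : Prop :=
  ∃ F : GradedFreeRes K I, Nonempty (F.B 1) ∧
    ∀ i, 1 ≤ i → ∀ b : F.B i, F.deg i b = q + i - 1

/-- The Castelnuovo–Mumford regularity of `S/I`: the least `r` such that `S/I` admits a
(finite) graded free resolution whose `i`-th free module is generated in degrees `≤ r + i`. -/
noncomputable def cmReg {σ : Type} (K : Type) [Field K] (I : Ideal (MvPolynomial σ K)) : ℕ :=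
  sInf {r : ℕ | ∃ F : GradedFreeRes K I, ∀ i, 1 ≤ i → ∀ b : F.B i, F.deg i b ≤ r + i}

/-! ## The special graphs of the paper (0-indexed versions) -/

/-- The disjoint union of two cycles of length `n` (for `n ≥ 3`). -/
def twoCyclesGraph (n : ℕ) : SimpleGraph (Fin 2 × Fin n) :=
  SimpleGraph.fromRel fun a b =>
    a.1 = b.1 ∧ (a.2.val + 1 = b.2.val ∨ (a.2.val = n - 1 ∧ b.2.val = 0))

/-- Two `2q`-cycles glued at the single vertex `0` (the paper's vertex `1`); a graph on
`4q - 1` vertices. -/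
def wedgeGraph (q : ℕ) : SimpleGraph (Fin (4 * q - 1)) :=
  SimpleGraph.fromRel fun a b =>
    (a.val + 1 = b.val ∧ b.val ≤ 2 * q - 1) ∨ (a.val = 2 * q - 1 ∧ b.val = 0) ∨
    (a.val = 0 ∧ b.val = 2 * q) ∨ (a.val + 1 = b.val ∧ 2 * q + 1 ≤ b.val) ∨
    (a.val = 4 * q - 2 ∧ b.val = 0)

/-- The graph `G^{(e)}_{k,m}`: a `2q`-cycle on the vertices `0,…,2q-1` together with a path
of length `2m` from vertex `0` to vertex `2k` through the new vertices `2q,…,2q+2m-2`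
(this is the paper's graph, with all vertex labels shifted down by one). -/
def Ge (q k m : ℕ) : SimpleGraph (Fin (2 * q + 2 * m - 1)) :=
  SimpleGraph.fromRel fun a b =>
    (a.val + 1 = b.val ∧ b.val ≤ 2 * q - 1) ∨ (a.val = 2 * q - 1 ∧ b.val = 0) ∨
    (a.val = 0 ∧ b.val = 2 * q) ∨ (a.val + 1 = b.val ∧ 2 * q + 1 ≤ b.val) ∨
    (a.val = 2 * q + 2 * m - 2 ∧ b.val = 2 * k)

/-- The graph `G^{(o)}_{k,m}`: a `2q`-cycle on the vertices `0,…,2q-1` together with a path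
of length `2m - 1` from vertex `0` to vertex `2k - 1` through the new vertices
`2q,…,2q+2m-3` (the paper's graph, labels shifted down by one). -/
def Go (q k m : ℕ) : SimpleGraph (Fin (2 * q + 2 * m - 2)) :=
  SimpleGraph.fromRel fun a b =>
    (a.val + 1 = b.val ∧ b.val ≤ 2 * q - 1) ∨ (a.val = 2 * q - 1 ∧ b.val = 0) ∨
    (a.val = 0 ∧ b.val = 2 * q) ∨ (a.val + 1 = b.val ∧ 2 * q + 1 ≤ b.val) ∨
    (a.val = 2 * q + 2 * m - 3 ∧ b.val = 2 * k - 1)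

/-!
A point of `t • P` (`t > 0`) is the vector of vertex sums `c(e) + c(e')` over the two edges
`e, e'` at each vertex, for a weighting `c ≥ 0` of total weight `t` of the edges; two weightings
give the same point exactly when they differ by a weighting alternating in sign along each
cycle. Shifting `c` by such a weighting so that it vanishes on an odd edge of each cycle gives a
unique representative, and when the point is a lattice point this representative is forced to be
integral. Counting the representatives by inclusion–exclusion over the two cycles (all odd edges
of a cycle positive) gives the Ehrhart series `(1 - x^q)^2 / (1 - x)^(4q)`. Since
`dim P = 4q - 3`, the `h^*`-polynomial is `(1 - x)^(4q - 2)` times this series, that is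
`(1 + x + ⋯ + x^(q-1))^2`, of degree `2q - 2`.
-/

theorem val_finRotate {n : ℕ} (i : Fin n) :
    (finRotate n i : ℕ) = if (i : ℕ) + 1 = n then 0 else (i : ℕ) + 1 := by
  obtain ⟨m, rfl⟩ : ∃ m, n = m + 1 := ⟨n - 1, by have := i.pos; omega⟩
  rw [coe_finRotate]
  simp [Fin.ext_iff]

theorem val_finRotate_symm {n : ℕ} (i : Fin n) :
    ((finRotate n).symm i : ℕ) = if (i : ℕ) = 0 then n - 1 else (i : ℕ) - 1 := by
  have h := val_finRotate ((finRotate n).symm i)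
  rw [Equiv.apply_symm_apply] at h
  have := ((finRotate n).symm i).isLt
  split_ifs at h ⊢ <;> omega

theorem finRotate_ne_self {n : ℕ} (hn : 2 ≤ n) (i : Fin n) : finRotate n i ≠ i := by
  intro h
  have := congrArg Fin.val h
  rw [val_finRotate] at this
  split_ifs at this <;> omega

theorem neg_one_pow_finRotate_symm {R : Type*} [Monoid R] [HasDistribNeg R] {q : ℕ}
    (i : Fin (2 * q)) : (-1 : R) ^ ((finRotate _).symm i : ℕ) = -(-1) ^ (i : ℕ) := by
  have := i.isLt
  rw [val_finRotate_symm]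
  split_ifs with h
  · rw [h, pow_zero, (show Odd (2 * q - 1) from ⟨q - 1, by omega⟩).neg_one_pow]
  · obtain ⟨k, hk⟩ : ∃ k, (i : ℕ) = k + 1 := ⟨(i : ℕ) - 1, by omega⟩
    rw [hk, Nat.add_sub_cancel, pow_succ, mul_neg_one, neg_neg]

theorem sum_neg_one_pow_fin_two_mul {R : Type*} [Ring R] (q : ℕ) :
    ∑ i : Fin (2 * q), (-1 : R) ^ (i : ℕ) = 0 := by
  rw [Fin.sum_univ_eq_sum_range (fun k => (-1 : R) ^ k), neg_one_geom_sum,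
    if_pos (even_two_mul q)]

theorem sub_neg_one_pow_mul_mem {R : Type*} [CommRing R] (S : AddSubgroup R) {n : ℕ}
    (f : Fin n → R) (hf : ∀ i, f ((finRotate n).symm i) + f i ∈ S) (i : Fin n) :
    f i - (-1) ^ (i : ℕ) * f ⟨0, i.pos⟩ ∈ S := by
  obtain ⟨k, hk⟩ := i
  induction k with
  | zero => simp
  | succ k ih =>
    have hstep := hf ⟨k + 1, hk⟩
    have hprev : (finRotate n).symm ⟨k + 1, hk⟩ = ⟨k, by omega⟩ := by
      ext
      rw [val_finRotate_symm]
      simp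
    rw [hprev] at hstep
    convert S.sub_mem hstep (ih (by omega)) using 1
    ring

theorem mem_smul_stdSimplex_iff {ι : Type*} [Fintype ι] {t : ℝ} (ht : 0 < t) (c : ι → ℝ) :
    c ∈ t • stdSimplex ℝ ι ↔ (∀ i, 0 ≤ c i) ∧ ∑ i, c i = t := by
  rw [Set.mem_smul_set_iff_inv_smul_mem₀ ht.ne', stdSimplex, Set.mem_ofPred_eq]
  simp only [Pi.smul_apply, smul_eq_mul, ← Finset.mul_sum, inv_mul_eq_one₀ ht.ne',
    eq_comm (a := t), mul_nonneg_iff_of_pos_left (inv_pos.mpr ht)]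

theorem mem_smul_image_stdSimplex {ι E : Type*} [Fintype ι] [AddCommGroup E] [Module ℝ E]
    (f : (ι → ℝ) →ₗ[ℝ] E) {t : ℝ} (ht : 0 < t) (x : E) :
    x ∈ t • f '' stdSimplex ℝ ι ↔ ∃ c : ι → ℝ, (∀ i, 0 ≤ c i) ∧ ∑ i, c i = t ∧ f c = x := by
  simp only [← image_smul_set, Set.mem_image, mem_smul_stdSimplex_iff ht, and_assoc]

theorem finrank_map_add_finrank_ker_of_le {K V W : Type*} [DivisionRing K] [AddCommGroup V]
    [Module K V] [AddCommGroup W] [Module K W] [FiniteDimensional K V] (f : V →ₗ[K] W)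
    {U : Submodule K V} (h : LinearMap.ker f ≤ U) :
    Module.finrank K (U.map f) + Module.finrank K (LinearMap.ker f) = Module.finrank K U := by
  have := (f.domRestrict U).finrank_range_add_finrank_ker
  rwa [LinearMap.range_domRestrict, LinearMap.ker_domRestrict,
    (Submodule.comapSubtypeEquivOfLe h).finrank_eq] at this

section StdSimplex

variable {ι : Type*} [Fintype ι] [DecidableEq ι]

theorem vectorSpan_stdSimplex :
    vectorSpan ℝ (stdSimplex ℝ ι) = vectorSpan ℝ (Set.range fun i : ι => Pi.single i (1 : ℝ)) := by
  rw [← convexHull_rangle_single_eq_stdSimplex, ← direction_affineSpan, affineSpan_convexHull,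
    direction_affineSpan]

theorem finrank_vectorSpan_stdSimplex_add_one [Nonempty ι] :
    Module.finrank ℝ (vectorSpan ℝ (stdSimplex ℝ ι)) + 1 = Fintype.card ι := by
  have hsingle : ⇑(Pi.basisFun ℝ ι) = fun i => Pi.single i 1 := by
    ext
    simp
  rw [vectorSpan_stdSimplex, ← hsingle]
  exact (Pi.basisFun ℝ ι).linearIndependent.affineIndependent.finrank_vectorSpan_add_one

theorem mem_vectorSpan_stdSimplex {c : ι → ℝ} (hc : ∑ i, c i = 0) :
    c ∈ vectorSpan ℝ (stdSimplex ℝ ι) := by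
  rw [vectorSpan_stdSimplex, mem_vectorSpan_iff_eq_weightedVSub]
  refine ⟨Finset.univ, c, hc, ?_⟩
  rw [Finset.weightedVSub_eq_linear_combination _ hc]
  exact pi_eq_sum_univ' c

end StdSimplex

theorem Set.ncard_sdiff_union_add {α : Type*} {A B C : Set α} (hA : A.Finite) (hB : B ⊆ A)
    (hC : C ⊆ A) : (A \ (B ∪ C)).ncard + B.ncard + C.ncard = A.ncard + (B ∩ C).ncard := by
  have h1 := Set.ncard_sdiff_add_ncard_of_subset (Set.union_subset hB hC) hA
  have h2 := Set.ncard_union_add_ncard_inter B C (hA.subset hB) (hA.subset hC)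
  omega

section StarsAndBars

variable {α : Type*} [Fintype α]

def posTuples (T : Finset α) (t : ℕ) : Set (α → ℕ) :=
  {a | ∑ p, a p = t ∧ ∀ p ∈ T, 1 ≤ a p}

theorem ncard_setOf_sum_eq [DecidableEq α] (t : ℕ) :
    {a : α → ℕ | ∑ p, a p = t}.ncard = (Fintype.card α).multichoose t := by
  rw [← Nat.card_coe_set_eq, ← Sym.card_sym_eq_multichoose, ← Nat.card_eq_fintype_card]
  exact (Nat.card_congr (Sym.equivNatSumOfFintype α t)).symm

theorem posTuples_finite [DecidableEq α] (T : Finset α) (t : ℕ) : (posTuples T t).Finite := by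
  have : Finite {a : α → ℕ | ∑ p, a p = t} := .of_equiv _ (Sym.equivNatSumOfFintype α t)
  exact (Set.toFinite {a : α → ℕ | ∑ p, a p = t}).subset fun a ha => ha.1

theorem posTuples_inter [DecidableEq α] (S T : Finset α) (t : ℕ) :
    posTuples S t ∩ posTuples T t = posTuples (S ∪ T) t := by
  ext a
  simp only [posTuples, Set.mem_inter_iff, Set.mem_ofPred_eq, Finset.mem_union]
  grind

theorem posTuples_eq_image [DecidableEq α] {T : Finset α} {t : ℕ} (hT : #T ≤ t) :
    posTuples T t =
      (· + fun p => if p ∈ T then 1 else 0) '' {b | ∑ p, b p = t - #T} := by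
  set ind : α → ℕ := fun p => if p ∈ T then 1 else 0
  have hind : ∑ p, ind p = #T := by simp [ind]
  ext a
  constructor
  · rintro ⟨hsum, hpos⟩
    have hle : ∀ p, ind p ≤ a p := fun p => by
      by_cases hp : p ∈ T <;> simp [ind, hp, hpos]
    refine ⟨a - ind, ?_, funext fun p => Nat.sub_add_cancel (hle p)⟩
    have : ∑ p, (a - ind) p + ∑ p, ind p = ∑ p, a p := by
      rw [← Finset.sum_add_distrib]
      exact Finset.sum_congr rfl fun p _ => Nat.sub_add_cancel (hle p)
    simp only [Set.mem_ofPred_eq]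
    omega
  · rintro ⟨b, hb, rfl⟩
    refine ⟨?_, fun p hp => by simp [ind, hp]⟩
    simp only [Pi.add_apply, Finset.sum_add_distrib, hind, Set.mem_ofPred_eq] at hb ⊢
    omega

theorem posTuples_eq_empty {T : Finset α} {t : ℕ} (hT : t < #T) : posTuples T t = ∅ := by
  refine Set.eq_empty_of_forall_notMem fun a ⟨hsum, hpos⟩ => hT.not_ge ?_
  calc #T = ∑ p ∈ T, 1 := Finset.card_eq_sum_ones T
    _ ≤ ∑ p ∈ T, a p := Finset.sum_le_sum hpos
    _ ≤ ∑ p, a p := Finset.sum_le_sum_of_subset (Finset.subset_univ T)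
    _ = t := hsum

theorem ncard_posTuples [DecidableEq α] (T : Finset α) (t : ℕ) :
    (posTuples T t).ncard = if #T ≤ t then (Fintype.card α).multichoose (t - #T) else 0 := by
  split_ifs with hT
  · rw [posTuples_eq_image hT, Set.ncard_image_of_injective _ (add_left_injective _),
      ncard_setOf_sum_eq]
  · rw [posTuples_eq_empty (not_le.mp hT), Set.ncard_empty]

end StarsAndBars

namespace PowerSeries

theorem coeff_invOneSubPow_val (d n : ℕ) :
    coeff n (invOneSubPow ℤ d).val = d.multichoose n := by
  cases d with
  | zero => cases n <;> simp [invOneSubPow_zero, coeff_one]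
  | succ e =>
    rw [invOneSubPow_val_succ_eq_mk_add_choose, coeff_mk, Nat.multichoose_eq,
      Nat.choose_symm_add, add_right_comm, Nat.add_sub_cancel]

theorem invOneSubPow_val_two : (invOneSubPow ℤ 2).val = mk 1 ^ 2 := by
  rw [show 2 = 1 + 1 from rfl, invOneSubPow_add, Units.val_mul,
    invOneSubPow_val_succ_eq_mk_add_choose, sq]
  simp only [zero_add, Nat.choose_zero_right, Nat.cast_one]
  rfl

theorem coeff_one_sub_X_pow (m j : ℕ) :
    coeff j ((1 - X : ℤ⟦X⟧) ^ m) = (-1) ^ j * m.choose j := by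
  have h : (1 - X : ℤ⟦X⟧) ^ m = rescale (-1) (((1 + Polynomial.X) ^ m : Polynomial ℤ) : ℤ⟦X⟧) := by
    simp [sub_eq_add_neg]
  rw [h, coeff_rescale, Polynomial.coeff_coe, Polynomial.coeff_one_add_X_pow]

theorem one_sub_X_pow_mul_mk_one (q : ℕ) :
    (1 - X ^ q : ℤ⟦X⟧) * mk 1 = mk fun i => if i < q then 1 else 0 := by
  ext i
  rw [sub_mul, one_mul, map_sub, coeff_X_pow_mul', coeff_mk]
  split_ifs <;> simp <;> omega

theorem coeff_sq_mk_lt_ne_zero_iff (q i : ℕ) :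
    coeff i ((mk fun i => if i < q then 1 else 0 : ℤ⟦X⟧) ^ 2) ≠ 0 ↔ i + 2 ≤ 2 * q := by
  rw [sq, coeff_mul]
  simp only [coeff_mk, ← ite_and, mul_ite, mul_one, mul_zero]
  constructor
  · intro h
    by_contra hi
    refine h (Finset.sum_eq_zero fun x hx => if_neg ?_)
    rw [Finset.HasAntidiagonal.mem_antidiagonal] at hx
    omega
  · intro hi
    refine (Finset.sum_pos' (fun x _ => by positivity) ⟨(min i (q - 1), i - min i (q - 1)),
      Finset.HasAntidiagonal.mem_antidiagonal.mpr (by omega), ?_⟩).ne'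
    rw [if_pos (by omega)]
    exact one_pos

end PowerSeries

theorem hstarCoeff_eq_coeff {V : Type} (P : Set (V → ℝ)) (d i : ℕ) :
    hstarCoeff P d i = PowerSeries.coeff i
      ((1 - PowerSeries.X) ^ (d + 1) * PowerSeries.mk fun t => ehrhart P t) := by
  rw [hstarCoeff, PowerSeries.coeff_mul, Finset.Nat.sum_antidiagonal_eq_sum_range_succ
    (fun j k => PowerSeries.coeff j ((1 - PowerSeries.X : PowerSeries ℤ) ^ (d + 1)) *
      PowerSeries.coeff k (PowerSeries.mk fun t => ehrhart P t))]
  simp [PowerSeries.coeff_one_sub_X_pow]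

theorem twoCyclesGraph_rel_iff {n : ℕ} (u v : Fin 2 × Fin n) :
    (u.1 = v.1 ∧ ((u.2 : ℕ) + 1 = v.2 ∨ ((u.2 : ℕ) = n - 1 ∧ (v.2 : ℕ) = 0))) ↔
      v = (u.1, finRotate n u.2) := by
  simp only [Prod.ext_iff, Fin.ext_iff (a := v.2), val_finRotate]
  have := u.2.isLt
  have := v.2.isLt
  constructor
  · rintro ⟨h1, h2⟩
    exact ⟨h1.symm, by split_ifs <;> omega⟩
  · rintro ⟨h1, h2⟩
    exact ⟨h1.symm, by split_ifs at h2 <;> omega⟩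

theorem edgeSet_twoCyclesGraph {n : ℕ} (hn : 2 ≤ n) :
    (twoCyclesGraph n).edgeSet =
      Set.range fun p : Fin 2 × Fin n => s(p, (p.1, finRotate n p.2)) := by
  ext e
  induction e using Sym2.ind with
  | _ u v =>
  rw [SimpleGraph.mem_edgeSet, twoCyclesGraph, SimpleGraph.fromRel_adj, twoCyclesGraph_rel_iff,
    twoCyclesGraph_rel_iff]
  constructor
  · rintro ⟨-, rfl | rfl⟩
    · exact ⟨u, rfl⟩
    · exact ⟨v, Sym2.eq_swap⟩
  · rintro ⟨p, hp⟩
    rcases Sym2.eq_iff.mp hp with ⟨rfl, rfl⟩ | ⟨rfl, rfl⟩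
    · exact ⟨fun h => finRotate_ne_self hn p.2 (congrArg Prod.snd h).symm, Or.inl rfl⟩
    · exact ⟨fun h => finRotate_ne_self hn p.2 (congrArg Prod.snd h), Or.inr rfl⟩

/-- Indexing the edges of the two cycles by their first endpoints `p`, so that edge `p` joins `p`
to `(p.1, p.2 + 1)`, `cycleIncidence R n c v` is the total weight under `c` of the two edges at
`v`. -/
def cycleIncidence (R : Type*) [CommSemiring R] (n : ℕ) :
    (Fin 2 × Fin n → R) →ₗ[R] (Fin 2 × Fin n → R) where
  toFun c v := c (v.1, (finRotate n).symm v.2) + c v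
  map_add' c d := by
    ext v
    simp only [Pi.add_apply]
    ring
  map_smul' r c := by
    ext v
    simp only [Pi.smul_apply, smul_eq_mul, RingHom.id_apply]
    ring

theorem cycleIncidence_apply {R : Type*} [CommSemiring R] {n : ℕ} (c : Fin 2 × Fin n → R)
    (v : Fin 2 × Fin n) : cycleIncidence R n c v = c (v.1, (finRotate n).symm v.2) + c v :=
  rfl

theorem cycleIncidence_natCast {n : ℕ} (a : Fin 2 × Fin n → ℕ) :
    cycleIncidence ℝ n (fun p => (a p : ℝ)) = fun v => (cycleIncidence ℕ n a v : ℝ) := by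
  ext v
  simp [cycleIncidence_apply]

theorem rho_cycleEdge {n : ℕ} (p : Fin 2 × Fin n) :
    rho s(p, (p.1, finRotate n p.2)) = cycleIncidence ℝ n (Pi.single p 1) := by
  ext v
  have : v = (p.1, finRotate n p.2) ↔ p = (v.1, (finRotate n).symm v.2) := by
    rw [Prod.ext_iff, Prod.ext_iff, Equiv.eq_symm_apply]
    tauto
  simp only [rho, Sym2.lift_mk, cycleIncidence_apply, Pi.single_apply, this, eq_comm (a := p)]
  ring

theorem edgePolytope_twoCyclesGraph {n : ℕ} (hn : 2 ≤ n) :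
    edgePolytope (twoCyclesGraph n) = cycleIncidence ℝ n '' stdSimplex ℝ (Fin 2 × Fin n) := by
  rw [edgePolytope, edgeSet_twoCyclesGraph hn, ← Set.range_comp,
    ← convexHull_rangle_single_eq_stdSimplex, LinearMap.image_convexHull, ← Set.range_comp]
  congr 2
  ext1 p
  exact rho_cycleEdge p

section Alternating

variable (R : Type*) [CommRing R] (q : ℕ)

def altWeight : (Fin 2 → R) →ₗ[R] (Fin 2 × Fin (2 * q) → R) where
  toFun l p := (-1) ^ (p.2 : ℕ) * l p.1
  map_add' l l' := by
    ext p
    simp only [Pi.add_apply]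
    ring
  map_smul' r l := by
    ext p
    simp only [Pi.smul_apply, smul_eq_mul, RingHom.id_apply]
    ring

variable {R q}

theorem altWeight_apply (l : Fin 2 → R) (p : Fin 2 × Fin (2 * q)) :
    altWeight R q l p = (-1) ^ (p.2 : ℕ) * l p.1 :=
  rfl

theorem cycleIncidence_altWeight (l : Fin 2 → R) :
    cycleIncidence R (2 * q) (altWeight R q l) = 0 := by
  ext v
  simp only [cycleIncidence_apply, altWeight_apply, neg_one_pow_finRotate_symm, Pi.zero_apply]
  ring

theorem sum_altWeight (l : Fin 2 → R) : ∑ p, altWeight R q l p = 0 := by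
  simp [Fintype.sum_prod_type, altWeight_apply, ← Finset.sum_mul, sum_neg_one_pow_fin_two_mul]

theorem eq_altWeight_of_cycleIncidence_eq_zero (hq : 0 < q) {d : Fin 2 × Fin (2 * q) → R}
    (hd : cycleIncidence R (2 * q) d = 0) :
    d = altWeight R q (fun b => d (b, ⟨0, by omega⟩)) := by
  ext ⟨b, i⟩
  have h := sub_neg_one_pow_mul_mem ⊥ (fun i => d (b, i))
    (fun i => by simpa [cycleIncidence_apply] using congrFun hd (b, i)) i
  rwa [AddSubgroup.mem_bot, sub_eq_zero] at h

theorem ker_cycleIncidence (hq : 0 < q) :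
    LinearMap.ker (cycleIncidence R (2 * q)) = LinearMap.range (altWeight R q) := by
  ext d
  refine ⟨fun hd => ⟨_, (eq_altWeight_of_cycleIncidence_eq_zero hq hd).symm⟩, ?_⟩
  rintro ⟨l, rfl⟩
  exact cycleIncidence_altWeight l

theorem altWeight_injective (hq : 0 < q) : Function.Injective (altWeight R q) := by
  intro l l' h
  ext b
  simpa [altWeight_apply] using congrFun h (b, ⟨0, by omega⟩)

end Alternating

theorem polyDim_edgePolytope_twoCyclesGraph {q : ℕ} (hq : 0 < q) :
    polyDim (edgePolytope (twoCyclesGraph (2 * q))) = 4 * q - 3 := by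
  have : NeZero (2 * q) := ⟨by omega⟩
  have hker : LinearMap.ker (cycleIncidence ℝ (2 * q)) ≤ vectorSpan ℝ (stdSimplex ℝ _) := by
    rw [ker_cycleIncidence hq]
    rintro _ ⟨l, rfl⟩
    exact mem_vectorSpan_stdSimplex (sum_altWeight l)
  have hrank := finrank_map_add_finrank_ker_of_le _ hker
  rw [ker_cycleIncidence hq, LinearMap.finrank_range_of_inj (altWeight_injective hq)] at hrank
  have hsimplex := finrank_vectorSpan_stdSimplex_add_one (ι := Fin 2 × Fin (2 * q))
  simp only [Module.finrank_fin_fun, Fintype.card_prod, Fintype.card_fin] at hrank hsimplex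
  rw [polyDim, edgePolytope_twoCyclesGraph (by omega), ← LinearMap.coe_toAffineMap,
    ← AffineMap.map_vectorSpan]
  change Module.finrank ℝ ((vectorSpan ℝ _).map (cycleIncidence ℝ (2 * q))) = _
  omega

section LatticePoints

variable {q : ℕ}

/-- One representative for each lattice point of `t • P`. -/
def canonTuples (q t : ℕ) : Set (Fin 2 × Fin (2 * q) → ℕ) :=
  {a | ∑ p, a p = t ∧ ∀ b, ∃ i : Fin (2 * q), Odd (i : ℕ) ∧ a (b, i) = 0}

theorem exists_altWeight_shift_canonical (hq : 0 < q) {c : Fin 2 × Fin (2 * q) → ℝ}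
    (hc : ∀ p, 0 ≤ c p) :
    ∃ l : Fin 2 → ℝ, (∀ p, 0 ≤ (c + altWeight ℝ q l) p) ∧
      ∀ b, ∃ i : Fin (2 * q), Odd (i : ℕ) ∧ (c + altWeight ℝ q l) (b, i) = 0 := by
  have hmin : ∀ b, ∃ i : Fin (2 * q), Odd (i : ℕ) ∧
      ∀ j : Fin (2 * q), Odd (j : ℕ) → c (b, i) ≤ c (b, j) := by
    intro b
    obtain ⟨i, hi, hle⟩ := (Finset.univ.filter fun i : Fin (2 * q) => Odd (i : ℕ)).exists_min_image
      (fun i => c (b, i)) ⟨⟨1, by omega⟩, by simp⟩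
    exact ⟨i, (Finset.mem_filter.mp hi).2, fun j hj => hle j (by simpa using hj)⟩
  choose i hodd hle using hmin
  -- shift by the minimum of `c` over the odd edges of each cycle
  refine ⟨fun b => c (b, i b), fun ⟨b, j⟩ => ?_, fun b => ⟨i b, hodd b, ?_⟩⟩
  · simp only [Pi.add_apply, altWeight_apply]
    rcases Nat.even_or_odd j with hj | hj
    · rw [hj.neg_one_pow, one_mul]
      exact add_nonneg (hc _) (hc _)
    · rw [hj.neg_one_pow]
      linarith [hle b j hj]
  · simp [altWeight_apply, (hodd b).neg_one_pow]

theorem mem_range_intCast_of_canonical (hq : 0 < q) {c : Fin 2 × Fin (2 * q) → ℝ}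
    (hint : ∀ v, cycleIncidence ℝ (2 * q) c v ∈ (Int.castAddHom ℝ).range)
    (hzero : ∀ b, ∃ i : Fin (2 * q), Odd (i : ℕ) ∧ c (b, i) = 0) (p : Fin 2 × Fin (2 * q)) :
    c p ∈ (Int.castAddHom ℝ).range := by
  obtain ⟨b, j⟩ := p
  have halt := sub_neg_one_pow_mul_mem _ (fun i => c (b, i)) (fun i => hint (b, i))
  obtain ⟨i, hi, hci⟩ := hzero b
  -- modulo `ℤ`, `c` alternates in sign along the cycle, so its zero at the odd edge `i` makes
  -- `c (b, 0)` integral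
  have h0 : c (b, ⟨0, by omega⟩) ∈ (Int.castAddHom ℝ).range := by
    simpa [hci, hi.neg_one_pow] using halt i
  simpa using AddSubgroup.add_mem _ (halt j) (AddSubgroup.zsmul_mem _ h0 ((-1) ^ (j : ℕ)))

theorem exists_mem_canonTuples (hq : 0 < q) {t : ℕ} {c : Fin 2 × Fin (2 * q) → ℝ}
    (hc : ∀ p, 0 ≤ c p) (hsum : ∑ p, c p = t) {x : Fin 2 × Fin (2 * q) → ℤ}
    (hx : cycleIncidence ℝ (2 * q) c = fun v => (x v : ℝ)) :
    ∃ a ∈ canonTuples q t, (fun v => (cycleIncidence ℕ (2 * q) a v : ℤ)) = x := by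
  obtain ⟨l, hnonneg, hcanon⟩ := exists_altWeight_shift_canonical hq hc
  have hshift : cycleIncidence ℝ (2 * q) (c + altWeight ℝ q l) = fun v => (x v : ℝ) := by
    rw [map_add, cycleIncidence_altWeight, add_zero, hx]
  choose z hz using mem_range_intCast_of_canonical hq (fun v => ⟨x v, by simp [hshift]⟩) hcanon
  have hcast : ∀ p, (((z p).toNat : ℕ) : ℝ) = (c + altWeight ℝ q l) p := fun p => by
    have hzp : (z p : ℝ) = (c + altWeight ℝ q l) p := hz p
    have : 0 ≤ z p := by exact_mod_cast hzp ▸ hnonneg p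
    rw [← hzp, ← Int.cast_natCast, Int.toNat_of_nonneg this]
  refine ⟨fun p => (z p).toNat, ⟨?_, fun b => ?_⟩, ?_⟩
  · have : ∑ p, (c + altWeight ℝ q l) p = t := by
      simp only [Pi.add_apply]
      rw [Finset.sum_add_distrib, sum_altWeight, add_zero, hsum]
    exact_mod_cast (Finset.sum_congr rfl fun p _ => hcast p).trans this
  · obtain ⟨i, hi, hzero⟩ := hcanon b
    exact ⟨i, hi, by exact_mod_cast (hcast (b, i)).trans hzero⟩
  · ext v
    have := congrFun ((cycleIncidence_natCast _).symm.trans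
      ((congrArg _ (funext hcast)).trans hshift)) v
    exact_mod_cast this

theorem mem_smul_edgePolytope_iff (hq : 0 < q) {t : ℕ} (ht : 0 < t)
    (x : Fin 2 × Fin (2 * q) → ℤ) :
    (fun v => (x v : ℝ)) ∈ (t : ℝ) • edgePolytope (twoCyclesGraph (2 * q)) ↔
      ∃ a ∈ canonTuples q t, (fun v => (cycleIncidence ℕ (2 * q) a v : ℤ)) = x := by
  rw [edgePolytope_twoCyclesGraph (by omega), mem_smul_image_stdSimplex _ (by positivity)]
  constructor
  · rintro ⟨c, hc, hsum, hx⟩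
    exact exists_mem_canonTuples hq hc hsum hx
  · rintro ⟨a, ⟨hsum, -⟩, rfl⟩
    refine ⟨fun p => a p, fun p => Nat.cast_nonneg _, by beta_reduce; exact_mod_cast hsum, ?_⟩
    rw [cycleIncidence_natCast]
    simp

theorem eq_of_cycleIncidence_eq (hq : 0 < q) {t : ℕ} {a a' : Fin 2 × Fin (2 * q) → ℕ}
    (ha : a ∈ canonTuples q t) (ha' : a' ∈ canonTuples q t)
    (h : cycleIncidence ℕ (2 * q) a = cycleIncidence ℕ (2 * q) a') : a = a' := by
  set d : Fin 2 × Fin (2 * q) → ℝ := fun p => (a' p : ℝ) - a p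
  have hd : cycleIncidence ℝ (2 * q) d = 0 := by
    have : d = (fun p => (a' p : ℝ)) - fun p => (a p : ℝ) := rfl
    rw [this, map_sub, cycleIncidence_natCast, cycleIncidence_natCast, h, sub_self]
  have halt := eq_altWeight_of_cycleIncidence_eq_zero hq hd
  have hzero : ∀ b, d (b, ⟨0, by omega⟩) = 0 := by
    intro b
    obtain ⟨i, hi, hai⟩ := ha.2 b
    obtain ⟨i', hi', hai'⟩ := ha'.2 b
    have e := congrFun halt (b, i)
    have e' := congrFun halt (b, i')
    simp only [altWeight_apply, hi.neg_one_pow, hi'.neg_one_pow, d, hai, hai',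
      Nat.cast_zero] at e e' ⊢
    linarith [(a' (b, i)).cast_nonneg (α := ℝ), (a (b, i')).cast_nonneg (α := ℝ)]
  ext p
  have e := congrFun halt p
  simp only [altWeight_apply, hzero, mul_zero, d, sub_eq_zero] at e
  exact_mod_cast e.symm

theorem ehrhart_edgePolytope_eq_ncard (hq : 0 < q) {t : ℕ} (ht : 0 < t) :
    ehrhart (edgePolytope (twoCyclesGraph (2 * q))) t = (canonTuples q t).ncard := by
  have himage : {x : Fin 2 × Fin (2 * q) → ℤ |
      (fun v => (x v : ℝ)) ∈ (t : ℝ) • edgePolytope (twoCyclesGraph (2 * q))} =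
      (fun a v => (cycleIncidence ℕ (2 * q) a v : ℤ)) '' canonTuples q t := by
    ext x
    exact mem_smul_edgePolytope_iff hq ht x
  have hinj : Set.InjOn (fun a v => (cycleIncidence ℕ (2 * q) a v : ℤ)) (canonTuples q t) :=
    fun a ha a' ha' h => eq_of_cycleIncidence_eq hq ha ha'
      (funext fun v => Int.ofNat_inj.mp (congrFun h v))
  rw [ehrhart, if_neg ht.ne', himage, Nat.card_coe_set_eq, hinj.ncard_image]

def oddEdges (q : ℕ) (b : Fin 2) : Finset (Fin 2 × Fin (2 * q)) :=
  Finset.univ.image fun k : Fin q => (b, ⟨2 * k + 1, by omega⟩)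

theorem mem_oddEdges {b : Fin 2} {p : Fin 2 × Fin (2 * q)} :
    p ∈ oddEdges q b ↔ p.1 = b ∧ Odd (p.2 : ℕ) := by
  obtain ⟨b', i, hi⟩ := p
  simp only [oddEdges, Finset.mem_image, Finset.mem_univ, true_and, Prod.mk.injEq, Fin.mk.injEq]
  constructor
  · rintro ⟨k, rfl, rfl⟩
    exact ⟨rfl, odd_two_mul_add_one _⟩
  · rintro ⟨rfl, k, rfl⟩
    exact ⟨⟨k, by omega⟩, rfl, rfl⟩

theorem card_oddEdges (b : Fin 2) : #(oddEdges q b) = q := by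
  rw [oddEdges, Finset.card_image_of_injective _ fun k k' h => by simpa [Fin.ext_iff] using h]
  simp

theorem card_oddEdges_union : #(oddEdges q 0 ∪ oddEdges q 1) = 2 * q := by
  rw [Finset.card_union_of_disjoint, card_oddEdges, card_oddEdges, two_mul]
  exact Finset.disjoint_left.mpr fun p h0 h1 =>
    absurd ((mem_oddEdges.mp h0).1.symm.trans (mem_oddEdges.mp h1).1) (by decide)

theorem mem_posTuples_oddEdges {b : Fin 2} {t : ℕ} {a : Fin 2 × Fin (2 * q) → ℕ} :
    a ∈ posTuples (oddEdges q b) t ↔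
      ∑ p, a p = t ∧ ∀ i : Fin (2 * q), Odd (i : ℕ) → a (b, i) ≠ 0 := by
  simp only [posTuples, Set.mem_ofPred_eq, mem_oddEdges, Prod.forall, and_imp,
    Nat.one_le_iff_ne_zero]
  constructor
  · exact fun ⟨h, h'⟩ => ⟨h, fun i => h' b i rfl⟩
  · rintro ⟨h, h'⟩
    exact ⟨h, fun _ i hb => hb ▸ h' i⟩

theorem canonTuples_eq_sdiff (t : ℕ) :
    canonTuples q t =
      posTuples ∅ t \ (posTuples (oddEdges q 0) t ∪ posTuples (oddEdges q 1) t) := by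
  ext a
  simp only [canonTuples, Set.mem_sdiff, Set.mem_union, mem_posTuples_oddEdges,
    Fin.forall_fin_two]
  simp only [posTuples, Set.mem_ofPred_eq, Finset.notMem_empty, IsEmpty.forall_iff, implies_true,
    and_true]
  push Not
  tauto

theorem ehrhart_edgePolytope_eq_coeff (hq : 0 < q) (t : ℕ) :
    ehrhart (edgePolytope (twoCyclesGraph (2 * q))) t = PowerSeries.coeff t
      ((1 - PowerSeries.X ^ q) ^ 2 * (PowerSeries.invOneSubPow ℤ (4 * q)).val) := by
  have hseries : (1 - PowerSeries.X ^ q : PowerSeries ℤ) ^ 2 =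
      1 - PowerSeries.X ^ q - PowerSeries.X ^ q + PowerSeries.X ^ (2 * q) := by
    ring
  simp only [hseries, add_mul, sub_mul, one_mul, map_add, map_sub, PowerSeries.coeff_X_pow_mul',
    PowerSeries.coeff_invOneSubPow_val]
  rcases Nat.eq_zero_or_pos t with rfl | ht
  · simp [ehrhart, Nat.multichoose_zero_right, hq.ne']
  have hcard : Fintype.card (Fin 2 × Fin (2 * q)) = 4 * q := by
    simp only [Fintype.card_prod, Fintype.card_fin]
    ring
  have hsub : ∀ T, posTuples T t ⊆ posTuples (∅ : Finset (Fin 2 × Fin (2 * q))) t :=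
    fun T a ha => ⟨ha.1, by simp⟩
  have hincl := Set.ncard_sdiff_union_add (posTuples_finite ∅ t) (hsub (oddEdges q 0))
    (hsub (oddEdges q 1))
  rw [← canonTuples_eq_sdiff, posTuples_inter, ncard_posTuples, ncard_posTuples,
    ncard_posTuples, ncard_posTuples, card_oddEdges, card_oddEdges, card_oddEdges_union,
    Finset.card_empty, Nat.sub_zero, hcard] at hincl
  rw [ehrhart_edgePolytope_eq_ncard hq ht]
  split_ifs at hincl ⊢ <;> omega

end LatticePoints

theorem hstarCoeff_edgePolytope_twoCyclesGraph {q : ℕ} (hq : 0 < q) (i : ℕ) :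
    hstarCoeff (edgePolytope (twoCyclesGraph (2 * q)))
        (polyDim (edgePolytope (twoCyclesGraph (2 * q)))) i =
      PowerSeries.coeff i ((PowerSeries.mk fun i => if i < q then 1 else 0) ^ 2) := by
  have hehrhart : (PowerSeries.mk fun t => ehrhart (edgePolytope (twoCyclesGraph (2 * q))) t) =
      (1 - PowerSeries.X ^ q) ^ 2 * (PowerSeries.invOneSubPow ℤ (2 + (4 * q - 2))).val := by
    ext t
    rw [PowerSeries.coeff_mk, ehrhart_edgePolytope_eq_coeff hq,
      show 2 + (4 * q - 2) = 4 * q by omega]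
  rw [hstarCoeff_eq_coeff, polyDim_edgePolytope_twoCyclesGraph hq, hehrhart,
    show 4 * q - 3 + 1 = 4 * q - 2 by omega, mul_left_comm,
    PowerSeries.one_sub_pow_mul_invOneSubPow_val_add_eq_invOneSubPow_val,
    PowerSeries.invOneSubPow_val_two, ← mul_pow, PowerSeries.one_sub_X_pow_mul_mk_one]

theorem hstarDeg_edgePolytope_twoCyclesGraph {q : ℕ} (hq : 0 < q) :
    hstarDeg (edgePolytope (twoCyclesGraph (2 * q))) = 2 * q - 2 := by
  have hsupport : {i | hstarCoeff (edgePolytope (twoCyclesGraph (2 * q)))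
      (polyDim (edgePolytope (twoCyclesGraph (2 * q)))) i ≠ 0} = Set.Iic (2 * q - 2) := by
    ext i
    rw [Set.mem_ofPred_eq, hstarCoeff_edgePolytope_twoCyclesGraph hq,
      PowerSeries.coeff_sq_mk_lt_ne_zero_iff, Set.mem_Iic]
    omega
  rw [hstarDeg, hsupport, csSup_Iic]

/-- For the disjoint union `G'` of two `2q`-cycles (`q ≥ 3`), the degree
of the `h^*`-polynomial of the edge polytope satisfies `deg(P_{G'}) ≥ 2q - 2 ≥ q`. -/
theorem stmt_5 (q : ℕ) (hq : 3 ≤ q) :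
    2 * q - 2 ≤ hstarDeg (edgePolytope (twoCyclesGraph (2 * q))) ∧
    q ≤ hstarDeg (edgePolytope (twoCyclesGraph (2 * q))) := by
  rw [hstarDeg_edgePolytope_twoCyclesGraph (by omega)]
  omega
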